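/- For every DIBI algebra A, the prime filter frame Pr(A) = (PF_A, ⊆, ⊕_A, ⊙_A, E_A) is a DIBI frame, i.e., it satisfies all twelve DIBI frame conditions. -/

import Mathlib

/-- A DIBI algebra: a Heyting algebra equipped with a commutative monoid `sep`
with unit `unit`, a weak monoid `tri`, residuals `wand`, `triimpR`, `triimpL`,
and the reverse-exchange law. -/
structure DIBIAlg where
  carrier : Type
  le : carrier → carrier → Prop
  inf : carrier → carrier → carrier
  sup : carrier → carrier → carrier
  himp : carrier → carrier → carrier
  top : carrier
  bot : carrier
  sep : carrier → carrier → carrier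
  wand : carrier → carrier → carrier
  tri : carrier → carrier → carrier
  triimpR : carrier → carrier → carrier
  triimpL : carrier → carrier → carrier
  unit : carrier
  -- partial order
  le_refl : ∀ a, le a a
  le_trans : ∀ a b c, le a b → le b c → le a c
  le_antisymm : ∀ a b, le a b → le b a → a = b
  -- bounded lattice
  inf_le_left : ∀ a b, le (inf a b) a
  inf_le_right : ∀ a b, le (inf a b) b
  le_inf : ∀ a b c, le a b → le a c → le a (inf b c)
  le_sup_left : ∀ a b, le a (sup a b)
  le_sup_right : ∀ a b, le b (sup a b)
  sup_le : ∀ a b c, le a c → le b c → le (sup a b) c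
  le_top : ∀ a, le a top
  bot_le : ∀ a, le bot a
  -- Heyting implication
  himp_adj : ∀ a b c, le (inf a b) c ↔ le a (himp b c)
  -- (sep, unit) commutative monoid
  sep_comm : ∀ a b, sep a b = sep b a
  sep_assoc : ∀ a b c, sep (sep a b) c = sep a (sep b c)
  sep_unit : ∀ a, sep a unit = a
  -- (tri, unit) weak monoid
  tri_assoc : ∀ a b c, tri (tri a b) c = tri a (tri b c)
  tri_unit_right : ∀ a, tri a unit = a
  tri_unit_left : ∀ a, le a (tri unit a)
  -- residuation
  wand_adj : ∀ a b c, le (sep a b) c ↔ le a (wand b c)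
  triimpR_adj : ∀ a b c, le (tri a b) c ↔ le a (triimpR b c)
  triimpL_adj : ∀ a b c, le (tri a b) c ↔ le b (triimpL a c)
  -- reverse exchange
  rev_exchange : ∀ a b c d, le (sep (tri a b) (tri c d)) (tri (sep a c) (sep b d))
/-- A DIBI frame: a preorder `le` on `X`, non-deterministic binary operations
`oplus` and `odot`, and a set of units `E`, satisfying the twelve DIBI frame conditions. -/
structure IsDIBIFrame {X : Type*} (le : X → X → Prop) (oplus odot : X → X → Set X)
    (E : Set X) : Prop where
  le_refl : ∀ x, le x x
  le_trans : ∀ x y z, le x y → le y z → le x z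
  oplus_down : ∀ x y z x' y', z ∈ oplus x y → le x' x → le y' y →
    ∃ z', le z' z ∧ z' ∈ oplus x' y'
  odot_up : ∀ x y z z', z ∈ odot x y → le z z' →
    ∃ x' y', le x x' ∧ le y y' ∧ z' ∈ odot x' y'
  oplus_comm : ∀ x y z, z ∈ oplus x y → z ∈ oplus y x
  oplus_assoc : ∀ x y z t w, w ∈ oplus t z → t ∈ oplus x y →
    ∃ s, s ∈ oplus y z ∧ w ∈ oplus x s
  oplus_unit_exists : ∀ x, ∃ e ∈ E, x ∈ oplus e x
  oplus_unit_coherence : ∀ e x y, e ∈ E → x ∈ oplus y e → le y x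
  odot_assoc : ∀ x y z w, (∃ t, w ∈ odot t z ∧ t ∈ odot x y) ↔
    (∃ s, s ∈ odot y z ∧ w ∈ odot x s)
  odot_unit_exists_left : ∀ x, ∃ e ∈ E, x ∈ odot e x
  odot_unit_exists_right : ∀ x, ∃ e ∈ E, x ∈ odot x e
  odot_coherence_right : ∀ e x y, e ∈ E → x ∈ odot y e → le y x
  unit_closure : ∀ e e', e ∈ E → le e e' → e' ∈ E
  rev_exchange : ∀ x y z y1 y2 z1 z2, x ∈ oplus y z → y ∈ odot y1 y2 → z ∈ odot z1 z2 →
    ∃ u v, u ∈ oplus y1 z1 ∧ v ∈ oplus y2 z2 ∧ x ∈ odot u v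

/-- A prime filter on (the underlying bounded distributive lattice of) a DIBI
algebra: a nonempty, upward-closed, meet-closed subset that is proper and prime. -/
def IsPrimeFilter (A : DIBIAlg) (F : Set A.carrier) : Prop :=
  F.Nonempty ∧
  (∀ x y, x ∈ F → A.le x y → y ∈ F) ∧
  (∀ x y, x ∈ F → y ∈ F → A.inf x y ∈ F) ∧
  A.bot ∉ F ∧
  (∀ x y, A.sup x y ∈ F → x ∈ F ∨ y ∈ F)

/-- The set of prime filters of a DIBI algebra. -/
def PF (A : DIBIAlg) : Type := {F : Set A.carrier // IsPrimeFilter A F}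

/-- `F ⊕_A G` in the prime filter frame. -/
def pfOplus (A : DIBIAlg) (F G : PF A) : Set (PF A) :=
  {H | ∀ a ∈ F.1, ∀ b ∈ G.1, A.sep a b ∈ H.1}

/-- `F ⊙_A G` in the prime filter frame. -/
def pfOdot (A : DIBIAlg) (F G : PF A) : Set (PF A) :=
  {H | ∀ a ∈ F.1, ∀ b ∈ G.1, A.tri a b ∈ H.1}

/-- The units of the prime filter frame: prime filters containing `I`. -/
def pfE (A : DIBIAlg) : Set (PF A) := {F | A.unit ∈ F.1}

/-!
Every existential frame condition asks for a prime filter `G` containing a filter `G₀` generated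
by products, such that `f a b ∈ H` for all `a` in a filter `X` and all `b ∈ G`, where `f` is `∗`
or `▷` (or its flip) and `H` is prime. Being residuated, `f` preserves finite joins and `⊥` in
each argument, so the `b` with `f a b ∈ H` for all `a ∈ X` form the complement of an ideal; the
prime filter theorem for distributive lattices separates `G₀` from that ideal. Reverse exchange
takes two such steps: the filter generated by `y₁ ∗ z₁` is extended to a prime `u` against the
filter generated by `y₂ ∗ z₂`, which is then extended to a prime `v` against `u`. The universal
conditions are immediate from the algebraic laws.
-/

open Order

section Residuated

variable {α : Type*}

structure IsResiduated [Preorder α] (f : α → α → α) : Prop where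
  left : ∀ b, ∃ g : α → α, GaloisConnection (f · b) g
  right : ∀ a, ∃ g : α → α, GaloisConnection (f a) g

namespace IsResiduated

variable {f : α → α → α}

theorem flip [Preorder α] (hf : IsResiduated f) : IsResiduated (flip f) :=
  ⟨hf.right, hf.left⟩

theorem mono [Preorder α] (hf : IsResiduated f) ⦃a a' b b' : α⦄ (ha : a ≤ a') (hb : b ≤ b') :
    f a b ≤ f a' b' :=
  ((hf.left b).choose_spec.monotone_l ha).trans ((hf.right a').choose_spec.monotone_l hb)

theorem map_sup_right [SemilatticeSup α] (hf : IsResiduated f) (a b c : α) :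
    f a (b ⊔ c) = f a b ⊔ f a c :=
  (hf.right a).choose_spec.l_sup

theorem map_bot_right [PartialOrder α] [OrderBot α] (hf : IsResiduated f) (a : α) :
    f a ⊥ = ⊥ :=
  (hf.right a).choose_spec.l_bot

end IsResiduated

namespace Order.PFilter

variable [Preorder α] (f : α → α → α)

def image2 (hf : ∀ ⦃a a' b b' : α⦄, a ≤ a' → b ≤ b' → f a b ≤ f a' b') (Y Z : PFilter α) :
    PFilter α :=
  IsPFilter.toPFilter (F := upperClosure (Set.image2 f Y Z)) <| by
    refine .of_def ?_ ?_ fun hxy hx => (upperClosure _).upper hxy hx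
    · obtain ⟨a, ha⟩ := Y.nonempty
      obtain ⟨b, hb⟩ := Z.nonempty
      exact ⟨f a b, subset_upperClosure (Set.mem_image2_of_mem ha hb)⟩
    · rintro _ ⟨_, ⟨a, ha, b, hb, rfl⟩, hab⟩ _ ⟨_, ⟨a', ha', b', hb', rfl⟩, hab'⟩
      obtain ⟨a₀, ha₀, ha₀a, ha₀a'⟩ := Y.directed a ha a' ha'
      obtain ⟨b₀, hb₀, hb₀b, hb₀b'⟩ := Z.directed b hb b' hb'
      exact ⟨f a₀ b₀, subset_upperClosure (Set.mem_image2_of_mem ha₀ hb₀),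
        (hf ha₀a hb₀b).trans hab, (hf ha₀a' hb₀b').trans hab'⟩

variable {f} {hf : ∀ ⦃a a' b b' : α⦄, a ≤ a' → b ≤ b' → f a b ≤ f a' b'} {Y Z : PFilter α}

theorem mem_image2 {c : α} : c ∈ image2 f hf Y Z ↔ ∃ a ∈ Y, ∃ b ∈ Z, f a b ≤ c := by
  change c ∈ upperClosure _ ↔ _
  simp [mem_upperClosure]

theorem apply_mem_image2 {a b : α} (ha : a ∈ Y) (hb : b ∈ Z) : f a b ∈ image2 f hf Y Z :=
  mem_image2.2 ⟨a, ha, b, hb, le_rfl⟩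

end Order.PFilter

theorem isIdeal_compl_setOf_forall_mem [Lattice α] [OrderBot α] {f : α → α → α}
    (hf : IsResiduated f) (X : PFilter α) {H : Set α} (hH : IsIdeal Hᶜ) :
    IsIdeal {b | ∀ a ∈ X, f a b ∈ H}ᶜ where
  IsLowerSet b c hcb hb := by
    simp only [Set.mem_compl_iff, Set.mem_ofPred_eq, not_forall] at hb ⊢
    obtain ⟨a, ha, hab⟩ := hb
    exact ⟨a, ha, hH.IsLowerSet (hf.mono le_rfl hcb) hab⟩
  Nonempty := by
    obtain ⟨a, ha⟩ := X.nonempty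
    exact ⟨⊥, fun h => hH.toIdeal.bot_mem (hf.map_bot_right a ▸ h a ha)⟩
  Directed := by
    rintro b hb c hc
    simp only [Set.mem_compl_iff, Set.mem_ofPred_eq, not_forall] at hb hc
    obtain ⟨a, ha, hab⟩ := hb
    obtain ⟨a', ha', hac⟩ := hc
    obtain ⟨a₀, ha₀, ha₀a, ha₀a'⟩ := X.directed a ha a' ha'
    refine ⟨b ⊔ c, fun h => ?_, le_sup_left, le_sup_right⟩
    have hb : f a₀ b ∈ hH.toIdeal := hH.IsLowerSet (hf.mono ha₀a le_rfl) hab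
    have hc : f a₀ c ∈ hH.toIdeal := hH.IsLowerSet (hf.mono ha₀a' le_rfl) hac
    exact Ideal.sup_mem hb hc (hf.map_sup_right a₀ b c ▸ h a₀ ha₀)

theorem exists_isPrime_compl_between [DistribLattice α] (F : PFilter α) {M : Set α}
    (hM : IsIdeal Mᶜ) (hFM : (F : Set α) ⊆ M) :
    ∃ J : Ideal α, J.IsPrime ∧ (F : Set α) ⊆ (J : Set α)ᶜ ∧ (J : Set α)ᶜ ⊆ M := by
  obtain ⟨J, hJ, hMJ, hFJ⟩ := DistribLattice.prime_ideal_of_disjoint_filter_ideal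
    (I := hM.toIdeal) (Set.disjoint_compl_right_iff_subset.2 hFM)
  exact ⟨J, hJ, hFJ.subset_compl_right, Set.compl_subset_comm.1 hMJ⟩

end Residuated

namespace DIBIAlg

variable (A : DIBIAlg)

-- Distributivity, needed for the prime filter theorem, comes for free from the Heyting implication.
instance : HeytingAlgebra A.carrier where
  le := A.le
  le_refl := A.le_refl
  le_trans := A.le_trans
  le_antisymm := A.le_antisymm
  sup := A.sup
  le_sup_left := A.le_sup_left
  le_sup_right := A.le_sup_right
  sup_le := A.sup_le
  inf := A.inf
  inf_le_left := A.inf_le_left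
  inf_le_right := A.inf_le_right
  le_inf := A.le_inf
  top := A.top
  le_top := A.le_top
  bot := A.bot
  bot_le := A.bot_le
  himp := A.himp
  le_himp_iff a b c := (A.himp_adj a b c).symm
  compl a := A.himp a A.bot
  himp_bot _ := rfl

theorem isResiduated_sep : IsResiduated A.sep where
  left b := ⟨A.wand b, fun a c => A.wand_adj a b c⟩
  right a := ⟨A.wand a, fun b c => by rw [A.sep_comm]; exact A.wand_adj b a c⟩

theorem isResiduated_tri : IsResiduated A.tri where
  left b := ⟨A.triimpR b, fun a c => A.triimpR_adj a b c⟩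
  right a := ⟨A.triimpL a, fun b c => A.triimpL_adj a b c⟩

end DIBIAlg

section PrimeFilterFrame

variable {A : DIBIAlg}

theorem isPrimeFilter_iff {F : Set A.carrier} :
    IsPrimeFilter A F ↔ IsPFilter F ∧ IsIdeal Fᶜ := by
  constructor
  · rintro ⟨hne, hup, hinf, hbot, hprime⟩
    refine ⟨.of_def hne (fun x hx y hy => ⟨x ⊓ y, hinf x y hx hy, inf_le_left, inf_le_right⟩)
      (fun hxy hx => hup _ _ hx hxy), ⟨fun x y hyx hx hy => hx (hup y x hy hyx), ⟨⊥, hbot⟩, ?_⟩⟩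
    intro x hx y hy
    exact ⟨x ⊔ y, fun h => (hprime x y h).elim hx hy, le_sup_left, le_sup_right⟩
  · rintro ⟨hF, hI⟩
    refine ⟨hF.toPFilter.nonempty, fun x y hx hxy => PFilter.mem_of_le (F := hF.toPFilter) hxy hx,
      fun x y hx hy => PFilter.inf_mem (F := hF.toPFilter) hx hy, hI.toIdeal.bot_mem, ?_⟩
    intro x y hxy
    by_contra! h
    exact Ideal.sup_mem (s := hI.toIdeal) h.1 h.2 hxy

namespace PF

def toPFilter (F : PF A) : PFilter A.carrier :=
  (isPrimeFilter_iff.1 F.2).1.toPFilter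

theorem mem_of_le (F : PF A) {a b : A.carrier} (hab : a ≤ b) (ha : a ∈ F.1) : b ∈ F.1 :=
  F.2.2.1 a b ha hab

theorem isIdeal_compl (F : PF A) : IsIdeal F.1ᶜ :=
  (isPrimeFilter_iff.1 F.2).2

theorem exists_between (F : PFilter A.carrier) {M : Set A.carrier} (hM : IsIdeal Mᶜ)
    (hFM : (F : Set A.carrier) ⊆ M) : ∃ P : PF A, (F : Set A.carrier) ⊆ P.1 ∧ P.1 ⊆ M := by
  obtain ⟨J, hJ, hFJ, hJM⟩ := exists_isPrime_compl_between F hM hFM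
  have hJ' : IsPrimeFilter A (J : Set A.carrier)ᶜ :=
    isPrimeFilter_iff.2 ⟨hJ.compl_filter, by simpa using J.isIdeal⟩
  exact ⟨⟨_, hJ'⟩, hFJ, hJM⟩

end PF

-- `pfOplus A` and `pfOdot A` are `pfRel A A.sep` and `pfRel A A.tri`.
variable (A) in
def pfRel (f : A.carrier → A.carrier → A.carrier) (F G : PF A) : Set (PF A) :=
  {H | ∀ a ∈ F.1, ∀ b ∈ G.1, f a b ∈ H.1}

variable {f : A.carrier → A.carrier → A.carrier}

theorem pfRel_flip (F G : PF A) : pfRel A (flip f) F G = pfRel A f G F :=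
  Set.ext fun _ => ⟨fun h a ha b hb => h b hb a ha, fun h a ha b hb => h b hb a ha⟩

theorem exists_pf_forall_mem_right (hf : IsResiduated f) (X G₀ : PFilter A.carrier) (H : PF A)
    (h : ∀ a ∈ X, ∀ b ∈ G₀, f a b ∈ H.1) :
    ∃ G : PF A, (G₀ : Set A.carrier) ⊆ G.1 ∧ ∀ a ∈ X, ∀ b ∈ G.1, f a b ∈ H.1 := by
  obtain ⟨G, hG₀G, hG⟩ := PF.exists_between G₀
    (isIdeal_compl_setOf_forall_mem hf X H.isIdeal_compl) fun b hb a ha => h a ha b hb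
  exact ⟨G, hG₀G, fun a ha b hb => hG hb a ha⟩

theorem exists_pf_forall_mem_left (hf : IsResiduated f) (X G₀ : PFilter A.carrier) (H : PF A)
    (h : ∀ a ∈ G₀, ∀ b ∈ X, f a b ∈ H.1) :
    ∃ G : PF A, (G₀ : Set A.carrier) ⊆ G.1 ∧ ∀ a ∈ G.1, ∀ b ∈ X, f a b ∈ H.1 := by
  obtain ⟨G, hG₀G, hG⟩ := exists_pf_forall_mem_right hf.flip X G₀ H fun b hb a ha => h a ha b hb
  exact ⟨G, hG₀G, fun a ha b hb => hG b hb a ha⟩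

theorem pfRel_assoc (hf : IsResiduated f) (hassoc : ∀ a b c, f (f a b) c = f a (f b c))
    {x y z t w : PF A} (hw : w ∈ pfRel A f t z) (ht : t ∈ pfRel A f x y) :
    ∃ s, s ∈ pfRel A f y z ∧ w ∈ pfRel A f x s := by
  obtain ⟨s, hyzs, hxs⟩ := exists_pf_forall_mem_right hf x.toPFilter
    (.image2 f hf.mono y.toPFilter z.toPFilter) w <| by
      rintro a ha c hc
      obtain ⟨b, hb, d, hd, hbd⟩ := PFilter.mem_image2.1 hc
      exact w.mem_of_le (hf.mono le_rfl hbd) (hassoc a b d ▸ hw _ (ht a ha b hb) d hd)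
  exact ⟨s, fun b hb c hc => hyzs (PFilter.apply_mem_image2 hb hc), hxs⟩

theorem pfRel_assoc_symm (hf : IsResiduated f) (hassoc : ∀ a b c, f (f a b) c = f a (f b c))
    {x y z s w : PF A} (hw : w ∈ pfRel A f x s) (hs : s ∈ pfRel A f y z) :
    ∃ t, w ∈ pfRel A f t z ∧ t ∈ pfRel A f x y := by
  rw [← pfRel_flip] at hw hs
  obtain ⟨t, hyx, hzt⟩ := pfRel_assoc hf.flip (fun a b c => (hassoc c b a).symm) hw hs
  rw [pfRel_flip] at hyx hzt
  exact ⟨t, hzt, hyx⟩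

theorem exists_unit_mem_pfRel_right (hf : IsResiduated f) {u : A.carrier}
    (hu : ∀ a, a ≤ f a u) (x : PF A) : ∃ e : PF A, u ∈ e.1 ∧ x ∈ pfRel A f x e := by
  obtain ⟨e, hue, hxe⟩ := exists_pf_forall_mem_right hf x.toPFilter (.principal u) x
    fun a ha b hub => x.mem_of_le ((hu a).trans (hf.mono le_rfl hub)) ha
  exact ⟨e, hue (PFilter.mem_principal.2 le_rfl), hxe⟩

theorem exists_unit_mem_pfRel_left (hf : IsResiduated f) {u : A.carrier}
    (hu : ∀ a, a ≤ f u a) (x : PF A) : ∃ e : PF A, u ∈ e.1 ∧ x ∈ pfRel A f e x := by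
  simpa only [pfRel_flip] using exists_unit_mem_pfRel_right hf.flip hu x

theorem subset_of_mem_pfRel {u : A.carrier} (hu : ∀ a, f a u ≤ a) {x y e : PF A}
    (he : u ∈ e.1) (hx : x ∈ pfRel A f y e) : y.1 ⊆ x.1 :=
  fun b hb => x.mem_of_le (hu b) (hx b hb u he)

theorem pf_rev_exchange {x y z y₁ y₂ z₁ z₂ : PF A} (hx : x ∈ pfOplus A y z)
    (hy : y ∈ pfOdot A y₁ y₂) (hz : z ∈ pfOdot A z₁ z₂) :
    ∃ u v, u ∈ pfOplus A y₁ z₁ ∧ v ∈ pfOplus A y₂ z₂ ∧ x ∈ pfOdot A u v := by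
  have hsep := A.isResiduated_sep
  have htri := A.isResiduated_tri
  set W := PFilter.image2 A.sep hsep.mono y₂.toPFilter z₂.toPFilter
  obtain ⟨u, hu, huW⟩ := exists_pf_forall_mem_left htri W
    (.image2 A.sep hsep.mono y₁.toPFilter z₁.toPFilter) x <| by
      rintro p hp q hq
      obtain ⟨a, ha, c, hc, hac⟩ := PFilter.mem_image2.1 hp
      obtain ⟨b, hb, d, hd, hbd⟩ := PFilter.mem_image2.1 hq
      exact x.mem_of_le (le_trans (A.rev_exchange a b c d) (htri.mono hac hbd))
        (hx _ (hy a ha b hb) _ (hz c hc d hd))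
  obtain ⟨v, hv, huv⟩ := exists_pf_forall_mem_right htri u.toPFilter W x huW
  exact ⟨u, v, fun a ha c hc => hu (PFilter.apply_mem_image2 ha hc),
    fun b hb d hd => hv (PFilter.apply_mem_image2 hb hd), huv⟩

end PrimeFilterFrame

/-- **Prime filter frames are DIBI frames.** For every DIBI algebra `A`, the prime
filter frame `Pr(A) = (PF_A, ⊆, ⊕_A, ⊙_A, E_A)` satisfies all twelve DIBI frame
conditions. -/
theorem primeFilterFrame_isDIBIFrame (A : DIBIAlg) :
    IsDIBIFrame (fun F G : PF A => F.1 ⊆ G.1) (pfOplus A) (pfOdot A) (pfE A) where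
  le_refl _ := subset_rfl
  le_trans _ _ _ := Set.Subset.trans
  oplus_down _ _ z _ _ hz hx hy := ⟨z, subset_rfl, fun a ha b hb => hz a (hx ha) b (hy hb)⟩
  odot_up x y _ _ hz hzz' := ⟨x, y, subset_rfl, subset_rfl, fun a ha b hb => hzz' (hz a ha b hb)⟩
  oplus_comm _ _ _ hz a ha b hb := A.sep_comm b a ▸ hz b hb a ha
  oplus_assoc _ _ _ _ _ := pfRel_assoc A.isResiduated_sep A.sep_assoc
  oplus_unit_exists := exists_unit_mem_pfRel_left A.isResiduated_sep
    fun a => (A.sep_comm A.unit a ▸ A.sep_unit a).ge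
  oplus_unit_coherence _ _ _ := subset_of_mem_pfRel fun a => (A.sep_unit a).le
  odot_assoc _ _ _ _ := ⟨fun ⟨_, hw, ht⟩ => pfRel_assoc A.isResiduated_tri A.tri_assoc hw ht,
    fun ⟨_, hs, hw⟩ => pfRel_assoc_symm A.isResiduated_tri A.tri_assoc hw hs⟩
  odot_unit_exists_left := exists_unit_mem_pfRel_left A.isResiduated_tri A.tri_unit_left
  odot_unit_exists_right := exists_unit_mem_pfRel_right A.isResiduated_tri
    fun a => (A.tri_unit_right a).ge
  odot_coherence_right _ _ _ := subset_of_mem_pfRel fun a => (A.tri_unit_right a).le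
  unit_closure _ _ he hee' := hee' he
  rev_exchange _ _ _ _ _ _ _ := pf_rev_exchange
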